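/- (Condition number and Fekete points.) Let z_1,…,z_d ∈ ℂ be pairwise distinct, let ζ_i = ζ(z_i) ∈ S(1/2), and let h(x_0,x_1) = c·∏_{i=1}^d (x_1 − z_i·x_0) with c ∈ ℂ∖{0}, a homogeneous polynomial of degree d whose roots correspond to z_1,…,z_d. Then max_{1≤i≤d} μ(h, z_i) ≤ √(d(d+1))·e^{E(ζ_1,…,ζ_d) − m_d}. In particular, if ζ_1,…,ζ_d is a set of elliptic Fekete points (i.e. E(ζ_1,…,ζ_d) = m_d), then max_{1≤i≤d} μ(h, z_i) ≤ √(d(d+1)). -/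

import Mathlib

noncomputable section

open Polynomial

/-- `ℝ³` with its Euclidean structure. -/
abbrev E3 : Type := EuclideanSpace ℝ (Fin 3)

/-- The Riemann sphere `S(1/2) ⊂ ℝ³`: the sphere of radius `1/2` centered at `(0,0,1/2)`. -/
def riemannSphere : Set E3 :=
  Metric.sphere ((WithLp.equiv 2 (Fin 3 → ℝ)).symm ![0, 0, 1/2]) (1/2)

/-- The identification `ℂ → S(1/2)`, `z ↦ ((Re z)/(1+|z|²), (Im z)/(1+|z|²), 1/(1+|z|²))`. -/
def toRiemannSphere (z : ℂ) : E3 :=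
  (WithLp.equiv 2 (Fin 3 → ℝ)).symm
    ![z.re / (1 + ‖z‖ ^ 2), z.im / (1 + ‖z‖ ^ 2),
      1 / (1 + ‖z‖ ^ 2)]

/-- The logarithmic energy `E(x_1,…,x_d) = −∑_{i<j} log‖x_i − x_j‖`. -/
def logEnergy {d : ℕ} (x : Fin d → E3) : ℝ :=
  -∑ p ∈ Finset.univ.filter (fun p : Fin d × Fin d => p.1 < p.2),
      Real.log (dist (x p.1) (x p.2))

/-- The minimal logarithmic energy `m_d` of `d` (pairwise distinct) points on `S(1/2)`. -/
def minEnergy (d : ℕ) : ℝ :=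
  sInf { e : ℝ | ∃ x : Fin d → E3,
    (∀ i, x i ∈ riemannSphere) ∧ Function.Injective x ∧ logEnergy x = e }

/-- The Bombieri–Weyl norm of the degree-`d` binary form `h = ∑_k f_k·x_0^{d−k}x_1^k`
determined by a univariate polynomial `f` of degree (at most) `d`:
`‖h‖² = ∑_k |f_k|²·(d−k)!k!/d! = ∑_k |f_k|²/binom(d,k)`. -/
def bwNormBinary (d : ℕ) (f : Polynomial ℂ) : ℝ :=
  Real.sqrt (∑ k ∈ Finset.range (d + 1), ‖f.coeff k‖ ^ 2 / (d.choose k))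

/-- The condition number `μ(h,z) = d^{1/2}·(1+|z|²)^{(d−2)/2}·‖h‖/|f′(z)|` of the binary form
`h` of degree `d` with dehomogenization `f(w) = h(1,w)` at a simple root `z` of `f`. -/
def muUnivariate (d : ℕ) (f : Polynomial ℂ) (z : ℂ) : ℝ :=
  Real.sqrt d * (1 + ‖z‖ ^ 2) ^ (((d : ℝ) - 2) / 2) * bwNormBinary d f /
    ‖f.derivative.eval z‖

/-!
Write `A(w) = 1 + |w|²`. Since `|w - z_j|² = ‖ζ(w) - ζ(z_j)‖² A(w) A(z_j)`, the quotient
`|f(w)|² / A(w)^d` is `|c|² ∏_j A(z_j)` times the squared product of the chordal distances from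
`ζ(w)` to the `ζ_j`. Moving `ζ_i` to `ζ(w)` yields a configuration of energy at least `m_d`, so
`∏_{k≠i} ‖ζ(w) - ζ_k‖ ≤ e^{E - m_d} ∏_{k≠i} ‖ζ_i - ζ_k‖`, and the right-hand product is read off
`f'(z_i)`. Hence `|f(w)|² ≤ M² A(w)^d` with `M = e^{E - m_d} |f'(z_i)| / A(z_i)^{(d-2)/2}`.
Finally `‖h‖² ≤ (d + 1) M²`: discrete Parseval over the circle `|w| = r` bounds
`∑_k |f_k|² r^{2k}` by `M² (1 + r²)^d`, and averaging over `r² = u / (1 - u)`, `u ∈ (0, 1)`,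
turns the weights into Beta integrals `∫ u^k (1 - u)^{d-k} du = 1 / ((d + 1) binom(d, k))`.
-/

open Finset ComplexConjugate
open scoped Nat

theorem norm_sub_sq_eq_dist_toRiemannSphere_sq_mul (a b : ℂ) :
    ‖a - b‖ ^ 2 = dist (toRiemannSphere a) (toRiemannSphere b) ^ 2 *
      ((1 + ‖a‖ ^ 2) * (1 + ‖b‖ ^ 2)) := by
  have hnorm : ∀ w : ℂ, ‖w‖ ^ 2 = w.re ^ 2 + w.im ^ 2 := fun w => by
    rw [← Complex.normSq_eq_norm_sq, Complex.normSq_apply]; ring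
  have ha : 0 < 1 + ‖a‖ ^ 2 := by positivity
  have hb : 0 < 1 + ‖b‖ ^ 2 := by positivity
  rw [EuclideanSpace.dist_eq, Real.sq_sqrt (by positivity)]
  simp only [Fin.sum_univ_three, toRiemannSphere, WithLp.equiv_symm_apply, PiLp.toLp_apply,
    Matrix.cons_val_zero, Matrix.cons_val_one, Matrix.cons_val_two, Matrix.head_cons,
    Matrix.tail_cons, Real.dist_eq, sq_abs]
  rw [hnorm a, hnorm b, hnorm (a - b)] at *
  simp only [Complex.sub_re, Complex.sub_im]
  field_simp
  ring

theorem toRiemannSphere_mem_riemannSphere (z : ℂ) : toRiemannSphere z ∈ riemannSphere := by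
  have hnorm : ‖z‖ ^ 2 = z.re ^ 2 + z.im ^ 2 := by
    rw [← Complex.normSq_eq_norm_sq, Complex.normSq_apply]; ring
  have hz : 0 < 1 + ‖z‖ ^ 2 := by positivity
  rw [riemannSphere, Metric.mem_sphere, EuclideanSpace.dist_eq, Real.sqrt_eq_iff_eq_sq
    (by positivity) (by norm_num)]
  simp only [Fin.sum_univ_three, toRiemannSphere, WithLp.equiv_symm_apply, PiLp.toLp_apply,
    Matrix.cons_val_zero, Matrix.cons_val_one, Matrix.cons_val_two, Matrix.head_cons,
    Matrix.tail_cons, Real.dist_eq, sq_abs]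
  rw [hnorm] at *
  field_simp
  ring

theorem toRiemannSphere_injective : Function.Injective toRiemannSphere := fun a b hab => by
  have h := norm_sub_sq_eq_dist_toRiemannSphere_sq_mul a b
  rw [hab, dist_self] at h
  simpa [sub_eq_zero] using h

theorem dist_le_one_of_mem_riemannSphere {x y : E3} (hx : x ∈ riemannSphere)
    (hy : y ∈ riemannSphere) : dist x y ≤ 1 := by
  rw [riemannSphere, Metric.mem_sphere] at hx hy
  linarith [dist_triangle_right x y ((WithLp.equiv 2 (Fin 3 → ℝ)).symm ![0, 0, 1/2])]

theorem logEnergy_nonneg {d : ℕ} {x : Fin d → E3} (hx : ∀ i, x i ∈ riemannSphere) :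
    0 ≤ logEnergy x :=
  neg_nonneg.2 <| sum_nonpos fun p _ =>
    Real.log_nonpos dist_nonneg (dist_le_one_of_mem_riemannSphere (hx p.1) (hx p.2))

theorem minEnergy_le_logEnergy {d : ℕ} {x : Fin d → E3} (hx : ∀ i, x i ∈ riemannSphere)
    (hinj : Function.Injective x) : minEnergy d ≤ logEnergy x :=
  csInf_le ⟨0, by rintro e ⟨y, hy, -, rfl⟩; exact logEnergy_nonneg hy⟩ ⟨x, hx, hinj, rfl⟩

theorem logEnergy_eq_neg_sum_sum_div_two {d : ℕ} (x : Fin d → E3) :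
    logEnergy x = -(∑ j, ∑ k, Real.log (dist (x j) (x k))) / 2 := by
  set L : Fin d × Fin d → ℝ := fun p => Real.log (dist (x p.1) (x p.2))
  -- The diagonal terms vanish because `Real.log 0 = 0`.
  have hsplit : ∀ p, L p = (if p.1 < p.2 then L p else 0) + if p.2 < p.1 then L p else 0 := by
    rintro ⟨j, k⟩
    rcases lt_trichotomy j k with h | rfl | h
    · simp [h, h.not_gt]
    · simp [L]
    · simp [h, h.not_gt]
  have hswap : ∑ p, (if p.2 < p.1 then L p else 0) = ∑ p, if p.1 < p.2 then L p else 0 :=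
    Fintype.sum_equiv (Equiv.prodComm _ _) _ _ fun p => by simp [L, dist_comm]
  rw [← Fintype.sum_prod_type', Fintype.sum_congr _ _ hsplit, sum_add_distrib, hswap,
    ← sum_filter, logEnergy]
  ring

theorem logEnergy_eq_logEnergy_comp_succAbove_sub {n : ℕ} (x : Fin (n + 1) → E3)
    (i : Fin (n + 1)) :
    logEnergy x =
      logEnergy (x ∘ i.succAbove) - ∑ k, Real.log (dist (x i) (x (i.succAbove k))) := by
  simp only [logEnergy_eq_neg_sum_sum_div_two, Fin.sum_univ_succAbove _ i, dist_self,
    Real.log_zero, zero_add, sum_add_distrib, Function.comp_apply, dist_comm _ (x i)]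
  ring

theorem Function.Injective.update {α β : Type*} [DecidableEq α] {x : α → β}
    (hx : Function.Injective x) {i : α} {v : β} (hv : ∀ j ≠ i, v ≠ x j) :
    Function.Injective (Function.update x i v) := by
  intro a b hab
  by_cases ha : a = i <;> by_cases hb : b = i
  · exact ha.trans hb.symm
  · exact absurd (by simpa [ha, hb] using hab) (hv b hb)
  · exact absurd (by simpa [ha, hb] using hab.symm) (hv a ha)
  · exact hx (by simpa [ha, hb] using hab)

theorem prod_dist_le_prod_dist_mul_exp {n : ℕ} {x : Fin (n + 1) → E3}
    (hx : ∀ j, x j ∈ riemannSphere) (hinj : Function.Injective x) (i : Fin (n + 1))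
    {v : E3} (hv : v ∈ riemannSphere) :
    ∏ k, dist v (x (i.succAbove k)) ≤
      (∏ k, dist (x i) (x (i.succAbove k))) * Real.exp (logEnergy x - minEnergy (n + 1)) := by
  by_cases hcoll : ∃ k, v = x (i.succAbove k)
  · obtain ⟨k, rfl⟩ := hcoll
    rw [prod_eq_zero (mem_univ k) (dist_self (x (i.succAbove k)))]
    exact mul_nonneg (prod_nonneg fun _ _ => dist_nonneg) (Real.exp_pos _).le
  push Not at hcoll
  have hy_mem : ∀ j, Function.update x i v j ∈ riemannSphere :=
    (Function.forall_update_iff x fun _ y => y ∈ riemannSphere).2 ⟨hv, fun j _ => hx j⟩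
  have hy_inj : Function.Injective (Function.update x i v) := hinj.update fun j hj => by
    obtain ⟨k, rfl⟩ := Fin.exists_succAbove_eq hj
    exact hcoll k
  have hy_comp : Function.update x i v ∘ i.succAbove = x ∘ i.succAbove :=
    Function.update_comp_eq_of_notMem_range _ _ (by simp [Fin.range_succAbove])
  have hmin := minEnergy_le_logEnergy hy_mem hy_inj
  rw [logEnergy_eq_logEnergy_comp_succAbove_sub _ i, hy_comp, Function.update_self] at hmin
  simp only [Function.update_of_ne (Fin.succAbove_ne i _)] at hmin
  have hv_pos : ∀ k ∈ univ, 0 < dist v (x (i.succAbove k)) := fun k _ => dist_pos.2 (hcoll k)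
  have hx_pos : ∀ k ∈ univ, 0 < dist (x i) (x (i.succAbove k)) := fun k _ =>
    dist_pos.2 (hinj.ne (Fin.succAbove_ne i k).symm)
  rw [← Real.exp_log (prod_pos hv_pos), ← Real.exp_log (prod_pos hx_pos), ← Real.exp_add,
    Real.exp_le_exp, Real.log_prod (fun k hk => (hv_pos k hk).ne'),
    Real.log_prod (fun k hk => (hx_pos k hk).ne'), logEnergy_eq_logEnergy_comp_succAbove_sub x i]
  linarith

theorem integral_pow_mul_one_sub_pow (k m : ℕ) :
    ∫ u in (0:ℝ)..1, u ^ k * (1 - u) ^ m = (((k + m + 1 : ℕ) : ℝ) * (k + m).choose k)⁻¹ := by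
  have hβ := Complex.betaIntegral_eval_nat_add_one_right (u := (k + 1 : ℂ)) (by simp; positivity) m
  simp only [Complex.betaIntegral, add_sub_cancel_right, Complex.cpow_natCast] at hβ
  have hasc : (k + 1).ascFactorial (m + 1) = (k + m + 1) * (k + m).choose k * m ! := by
    apply Nat.eq_of_mul_eq_mul_left (Nat.factorial_pos k)
    rw [Nat.factorial_mul_ascFactorial, ← add_assoc, Nat.factorial_succ, add_comm k m,
      ← Nat.add_choose_mul_factorial_mul_factorial m k]
    ring
  have hprod :
      ∏ j ∈ range (m + 1), ((k + 1 : ℂ) + j) = (k + m + 1) * (k + m).choose k * m ! := by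
    exact_mod_cast (Nat.ascFactorial_eq_prod_range (k + 1) (m + 1)).symm.trans hasc
  apply Complex.ofReal_injective
  rw [← intervalIntegral.integral_ofReal]
  push_cast
  rw [hβ, hprod]
  have : (m ! : ℂ) ≠ 0 := Nat.cast_ne_zero.2 (Nat.factorial_ne_zero m)
  field_simp

theorem IsPrimitiveRoot.sum_pow_mul_conj_pow {ω : ℂ} {N : ℕ} (hω : IsPrimitiveRoot ω N) {k l : ℕ}
    (hk : k < N) (hl : l < N) :
    ∑ j ∈ range N, (ω ^ j) ^ k * conj ((ω ^ j) ^ l) = if k = l then (N : ℂ) else 0 := by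
  have hN : N ≠ 0 := by omega
  have hω0 : ω ≠ 0 := hω.ne_zero hN
  have hterm : ∀ j, (ω ^ j) ^ k * conj ((ω ^ j) ^ l) = (ω ^ k * (ω ^ l)⁻¹) ^ j := fun j => by
    rw [← Complex.inv_eq_conj (by rw [norm_pow, norm_pow, hω.norm'_eq_one hN, one_pow, one_pow]),
      mul_pow, inv_pow, pow_right_comm, pow_right_comm ω l]
  simp_rw [hterm]
  split_ifs with hkl
  · subst hkl
    simp [mul_inv_cancel₀ (pow_ne_zero k hω0)]
  · have hq : ω ^ k * (ω ^ l)⁻¹ ≠ 1 := fun h =>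
      hkl (hω.pow_inj hk hl (mul_inv_eq_one₀ (pow_ne_zero l hω0) |>.1 h))
    rw [geom_sum_eq hq, mul_pow, inv_pow, pow_right_comm, pow_right_comm ω l, hω.pow_eq_one]
    simp

theorem sum_norm_sq_eval_mul_pow {ω : ℂ} {N : ℕ} (hω : IsPrimitiveRoot ω N) {f : ℂ[X]}
    (hf : f.natDegree < N) (x : ℂ) :
    ∑ j ∈ range N, ‖f.eval (x * ω ^ j)‖ ^ 2 =
      N * ∑ k ∈ range N, ‖f.coeff k‖ ^ 2 * ‖x‖ ^ (2 * k) := by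
  set a : ℕ → ℂ := fun k => f.coeff k * x ^ k
  have heval : ∀ j, f.eval (x * ω ^ j) = ∑ k ∈ range N, a k * (ω ^ j) ^ k := fun j => by
    simp_rw [eval_eq_sum_range' hf, a, mul_pow, mul_assoc]
  have hcoeff : ∀ k, ‖f.coeff k‖ ^ 2 * ‖x‖ ^ (2 * k) = Complex.normSq (a k) := fun k => by
    rw [Complex.normSq_eq_norm_sq, norm_mul, norm_pow, mul_pow, ← pow_mul, mul_comm k]
  simp_rw [hcoeff, ← Complex.normSq_eq_norm_sq]
  apply Complex.ofReal_injective
  push_cast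
  simp_rw [← Complex.mul_conj, heval, map_sum, sum_mul_sum, map_mul]
  calc ∑ j ∈ range N, ∑ k ∈ range N, ∑ l ∈ range N,
        a k * (ω ^ j) ^ k * (conj (a l) * conj ((ω ^ j) ^ l))
      = ∑ k ∈ range N, ∑ l ∈ range N,
          a k * conj (a l) * ∑ j ∈ range N, (ω ^ j) ^ k * conj ((ω ^ j) ^ l) := by
        rw [sum_comm]; refine sum_congr rfl fun k _ => ?_
        rw [sum_comm]; refine sum_congr rfl fun l _ => ?_
        rw [mul_sum]; exact sum_congr rfl fun j _ => by ring
    _ = N * ∑ k ∈ range N, a k * conj (a k) := by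
        rw [mul_sum]
        refine sum_congr rfl fun k hk => ?_
        rw [sum_congr rfl fun l hl => by
          rw [hω.sum_pow_mul_conj_pow (mem_range.1 hk) (mem_range.1 hl)]]
        simp [hk, mul_comm]

theorem sum_norm_coeff_sq_mul_pow_le {f : ℂ[X]} {d : ℕ} (hf : f.natDegree ≤ d) {r B : ℝ}
    (hr : 0 ≤ r) (hB : ∀ w : ℂ, ‖w‖ = r → ‖f.eval w‖ ^ 2 ≤ B) :
    ∑ k ∈ range (d + 1), ‖f.coeff k‖ ^ 2 * r ^ (2 * k) ≤ B := by
  obtain ⟨ω, hω⟩ : ∃ ω : ℂ, IsPrimitiveRoot ω (d + 1) :=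
    ⟨_, Complex.isPrimitiveRoot_exp (d + 1) d.succ_ne_zero⟩
  have hparseval := sum_norm_sq_eval_mul_pow hω (Nat.lt_succ_of_le hf) r
  rw [Complex.norm_real, Real.norm_of_nonneg hr] at hparseval
  have hsum : ∑ j ∈ range (d + 1), ‖f.eval (r * ω ^ j)‖ ^ 2 ≤ (d + 1 : ℕ) * B := by
    refine (sum_le_sum fun j _ => hB _ ?_).trans (by simp)
    rw [norm_mul, norm_pow, hω.norm'_eq_one d.succ_ne_zero, one_pow, mul_one, Complex.norm_real,
      Real.norm_of_nonneg hr]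
  rw [hparseval] at hsum
  exact le_of_mul_le_mul_left hsum (by positivity)

theorem sum_norm_coeff_sq_mul_bernstein_le {f : ℂ[X]} {d : ℕ} (hf : f.natDegree ≤ d) {K : ℝ}
    (hK : ∀ w : ℂ, ‖f.eval w‖ ^ 2 ≤ K * (1 + ‖w‖ ^ 2) ^ d) {u : ℝ} (hu : u ∈ Set.Ioo 0 1) :
    ∑ k ∈ range (d + 1), ‖f.coeff k‖ ^ 2 * (u ^ k * (1 - u) ^ (d - k)) ≤ K := by
  obtain ⟨hu0, hu1⟩ := hu
  have hu1' : 0 < 1 - u := sub_pos.2 hu1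
  set r := √(u / (1 - u))
  have hr : r ^ 2 = u / (1 - u) := Real.sq_sqrt (by positivity)
  have hcircle := sum_norm_coeff_sq_mul_pow_le hf (Real.sqrt_nonneg (u / (1 - u)))
    fun w hw => hw ▸ hK w
  have hterm : ∀ k ∈ range (d + 1), ‖f.coeff k‖ ^ 2 * (u ^ k * (1 - u) ^ (d - k)) =
      (1 - u) ^ d * (‖f.coeff k‖ ^ 2 * r ^ (2 * k)) := fun k hk => by
    rw [pow_mul, hr, div_pow, ← Nat.sub_add_cancel (Nat.lt_succ_iff.1 (mem_range.1 hk)), pow_add,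
      Nat.add_sub_cancel]
    field_simp
  calc ∑ k ∈ range (d + 1), ‖f.coeff k‖ ^ 2 * (u ^ k * (1 - u) ^ (d - k))
      = (1 - u) ^ d * ∑ k ∈ range (d + 1), ‖f.coeff k‖ ^ 2 * r ^ (2 * k) := by
        rw [mul_sum]; exact sum_congr rfl hterm
    _ ≤ (1 - u) ^ d * (K * (1 + r ^ 2) ^ d) := mul_le_mul_of_nonneg_left hcircle (by positivity)
    _ = K := by
        rw [hr, mul_left_comm, ← mul_pow]
        field_simp
        simp

theorem bwNormBinary_sq_le {f : ℂ[X]} {d : ℕ} (hf : f.natDegree ≤ d) {K : ℝ}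
    (hK : ∀ w : ℂ, ‖f.eval w‖ ^ 2 ≤ K * (1 + ‖w‖ ^ 2) ^ d) :
    bwNormBinary d f ^ 2 ≤ (d + 1) * K := by
  have hintegral :
      ∫ u in (0:ℝ)..1, ∑ k ∈ range (d + 1), ‖f.coeff k‖ ^ 2 * (u ^ k * (1 - u) ^ (d - k)) =
        ∑ k ∈ range (d + 1), ‖f.coeff k‖ ^ 2 / (d.choose k) / (d + 1) := by
    rw [intervalIntegral.integral_finsetSum fun k _ =>
      (Continuous.intervalIntegrable (by fun_prop) _ _)]
    refine sum_congr rfl fun k hk => ?_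
    have hkd : k + (d - k) = d := Nat.add_sub_cancel' (Nat.lt_succ_iff.1 (mem_range.1 hk))
    rw [intervalIntegral.integral_const_mul, integral_pow_mul_one_sub_pow, hkd]
    push_cast
    field_simp
  have hintegral_le := intervalIntegral.integral_mono_on_of_le_Ioo (μ := MeasureTheory.volume)
    zero_le_one (Continuous.intervalIntegrable (by fun_prop) _ _) intervalIntegrable_const
    fun u hu => sum_norm_coeff_sq_mul_bernstein_le hf hK hu
  rw [hintegral, intervalIntegral.integral_const, ← sum_div, sub_zero, one_smul,
    div_le_iff₀ (by positivity)] at hintegral_le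
  rw [bwNormBinary, Real.sq_sqrt (sum_nonneg fun k _ => by positivity)]
  linarith

theorem natDegree_C_mul_prod_X_sub_C_le {d : ℕ} (c : ℂ) (z : Fin d → ℂ) :
    (C c * ∏ j, (X - C (z j))).natDegree ≤ d :=
  (natDegree_C_mul_le _ _).trans (by simp)

theorem prod_norm_sub_sq {ι : Type*} [Fintype ι] (z : ι → ℂ) (w : ℂ) :
    (∏ j, ‖w - z j‖) ^ 2 = (∏ j, dist (toRiemannSphere w) (toRiemannSphere (z j))) ^ 2 *
      ((1 + ‖w‖ ^ 2) ^ Fintype.card ι * ∏ j, (1 + ‖z j‖ ^ 2)) := by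
  simp only [← prod_pow, norm_sub_sq_eq_dist_toRiemannSphere_sq_mul, prod_mul_distrib, prod_const,
    card_univ]

theorem eval_derivative_C_mul_prod_X_sub_C {n : ℕ} (c : ℂ) (z : Fin (n + 1) → ℂ)
    (i : Fin (n + 1)) :
    (C c * ∏ j, (X - C (z j))).derivative.eval (z i) = c * ∏ k, (z i - z (i.succAbove k)) := by
  rw [Fin.prod_univ_succAbove _ i]
  simp [eval_prod]

theorem norm_eval_C_mul_prod_X_sub_C_sq_le {n : ℕ} {z : Fin (n + 1) → ℂ}
    (hz : Function.Injective z) (c : ℂ) (i : Fin (n + 1)) (w : ℂ) :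
    ‖(C c * ∏ j, (X - C (z j))).eval w‖ ^ 2 ≤
      (Real.exp (logEnergy (fun j => toRiemannSphere (z j)) - minEnergy (n + 1)) *
        ‖(C c * ∏ j, (X - C (z j))).derivative.eval (z i)‖ /
          (1 + ‖z i‖ ^ 2) ^ ((((n + 1 : ℕ) : ℝ) - 2) / 2)) ^ 2 * (1 + ‖w‖ ^ 2) ^ (n + 1) := by
  have ha : 0 < 1 + ‖z i‖ ^ 2 := by positivity
  have hrpow : ((1 + ‖z i‖ ^ 2) ^ ((((n + 1 : ℕ) : ℝ) - 2) / 2)) ^ 2 * (1 + ‖z i‖ ^ 2) =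
      (1 + ‖z i‖ ^ 2) ^ n := by
    rw [← Real.rpow_natCast _ 2, ← Real.rpow_mul ha.le, ← Real.rpow_add_one ha.ne',
      ← Real.rpow_natCast _ n]
    congr 1
    push_cast
    ring
  have heval := prod_norm_sub_sq z w
  have hderiv := prod_norm_sub_sq (z ∘ i.succAbove) (z i)
  simp only [Fintype.card_fin, Function.comp_apply] at heval hderiv
  rw [Fin.prod_univ_succAbove (fun j => 1 + ‖z j‖ ^ 2) i] at heval
  rw [eval_derivative_C_mul_prod_X_sub_C, eval_mul, eval_C, eval_prod]
  simp only [eval_sub, eval_X, eval_C, norm_mul, norm_prod, mul_pow, div_pow, heval, hderiv,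
    ← hrpow]
  set ζ : Fin (n + 1) → E3 := fun j => toRiemannSphere (z j)
  set ε := Real.exp (logEnergy ζ - minEnergy (n + 1))
  set D := ∏ k, dist (ζ i) (ζ (i.succAbove k))
  have hζ : ∀ j, ζ j ∈ riemannSphere := fun j => toRiemannSphere_mem_riemannSphere (z j)
  have hw : toRiemannSphere w ∈ riemannSphere := toRiemannSphere_mem_riemannSphere w
  have hprod : ∏ j, dist (toRiemannSphere w) (ζ j) ≤ D * ε := by
    rw [Fin.prod_univ_succAbove _ i, ← one_mul (D * ε)]
    exact mul_le_mul (dist_le_one_of_mem_riemannSphere hw (hζ i))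
      (prod_dist_le_prod_dist_mul_exp hζ (toRiemannSphere_injective.comp hz) i hw)
      (prod_nonneg fun _ _ => dist_nonneg) zero_le_one
  calc _ ≤ ‖c‖ ^ 2 * ((D * ε) ^ 2 * ((1 + ‖w‖ ^ 2) ^ (n + 1) *
        ((1 + ‖z i‖ ^ 2) * ∏ k, (1 + ‖z (i.succAbove k)‖ ^ 2)))) := by
        gcongr
    _ = _ := by field_simp

theorem muUnivariate_C_mul_prod_X_sub_C_le {d : ℕ} {z : Fin d → ℂ} (hz : Function.Injective z)
    (c : ℂ) (i : Fin d) :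
    muUnivariate d (C c * ∏ j, (X - C (z j))) (z i) ≤
      √((d : ℝ) * ((d : ℝ) + 1)) *
        Real.exp (logEnergy (fun j => toRiemannSphere (z j)) - minEnergy d) := by
  obtain ⟨n, rfl⟩ := Nat.exists_eq_add_one_of_ne_zero i.pos.ne'
  set f := C c * ∏ j, (X - C (z j))
  set ε := Real.exp (logEnergy (fun j => toRiemannSphere (z j)) - minEnergy (n + 1))
  set t := (1 + ‖z i‖ ^ 2) ^ ((((n + 1 : ℕ) : ℝ) - 2) / 2)
  have ht : 0 < t := by positivity
  have hbw : bwNormBinary (n + 1) f ≤ √((n + 1 : ℕ) + 1) * (ε * ‖f.derivative.eval (z i)‖ / t) := by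
    have hsq := bwNormBinary_sq_le (natDegree_C_mul_prod_X_sub_C_le c z)
      (norm_eval_C_mul_prod_X_sub_C_sq_le hz c i)
    have hbw0 : 0 ≤ bwNormBinary (n + 1) f := Real.sqrt_nonneg _
    refine (pow_le_pow_iff_left₀ hbw0 (by positivity) two_ne_zero).1 ?_
    rwa [mul_pow, Real.sq_sqrt (by positivity)]
  rw [muUnivariate]
  refine div_le_of_le_mul₀ (norm_nonneg _) (by positivity) ?_
  calc √((n + 1 : ℕ) : ℝ) * t * bwNormBinary (n + 1) f
      ≤ √((n + 1 : ℕ) : ℝ) * t * (√((n + 1 : ℕ) + 1) * (ε * ‖f.derivative.eval (z i)‖ / t)) := by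
        gcongr
    _ = _ := by
        rw [Real.sqrt_mul (Nat.cast_nonneg _)]
        field_simp

theorem mu_le_of_energy_general (d : ℕ) (z : Fin d → ℂ) (hz : Function.Injective z)
    (c : ℂ) (f : Polynomial ℂ)
    (hf : f = Polynomial.C c * ∏ i, (Polynomial.X - Polynomial.C (z i))) :
    (∀ i, muUnivariate d f (z i) ≤
      Real.sqrt ((d : ℝ) * ((d : ℝ) + 1)) *
        Real.exp (logEnergy (fun i => toRiemannSphere (z i)) - minEnergy d)) ∧
    (logEnergy (fun i => toRiemannSphere (z i)) = minEnergy d →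
      ∀ i, muUnivariate d f (z i) ≤ Real.sqrt ((d : ℝ) * ((d : ℝ) + 1))) := by
  subst hf
  refine ⟨muUnivariate_C_mul_prod_X_sub_C_le hz c, fun hfekete i => ?_⟩
  simpa [hfekete] using muUnivariate_C_mul_prod_X_sub_C_le hz c i

/-- **Condition number and elliptic Fekete points** (Shub–Smale): if `z_1,…,z_d` are the
(distinct) roots of `f(w) = c·∏(w − z_i)` — i.e. of the binary form
`h = c·∏(x_1 − z_i·x_0)` — and `ζ_i` are the corresponding points on `S(1/2)`, then
`max_i μ(h,z_i) ≤ √(d(d+1))·exp(E(ζ_1,…,ζ_d) − m_d)`.  In particular, if the `ζ_i` form a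
set of elliptic Fekete points, then `max_i μ(h,z_i) ≤ √(d(d+1))`. -/
theorem mu_le_of_energy (d : ℕ) (hd : 1 ≤ d) (z : Fin d → ℂ) (hz : Function.Injective z)
    (c : ℂ) (hc : c ≠ 0) (f : Polynomial ℂ)
    (hf : f = Polynomial.C c * ∏ i, (Polynomial.X - Polynomial.C (z i))) :
    (∀ i, muUnivariate d f (z i) ≤
      Real.sqrt ((d : ℝ) * ((d : ℝ) + 1)) *
        Real.exp (logEnergy (fun i => toRiemannSphere (z i)) - minEnergy d)) ∧
    (logEnergy (fun i => toRiemannSphere (z i)) = minEnergy d →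
      ∀ i, muUnivariate d f (z i) ≤ Real.sqrt ((d : ℝ) * ((d : ℝ) + 1))) :=
  mu_le_of_energy_general d z hz c f hf

end
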